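/- Assume b < 0 and let N* be the unique solution of N·I(N) = 1. Then for every firing rate sequence {N_{k,∞}} with arbitrary initial value N_{0,∞} ≥ 0: the even-indexed subsequence {N_{2k,∞}} and the odd-indexed subsequence {N_{2k+1,∞}} are both monotone and contained in [0, 1/I(0)] from index 1 on, hence convergent; their limits N⁺ := lim N_{2k,∞} and N⁻ := lim N_{2k+1,∞} satisfy 1/I(N⁺) = N⁻ and 1/I(N⁻) = N⁺; and either N⁻ = N⁺ = N*, or N⁻ ≠ N⁺ with min(N⁻,N⁺) < N* < max(N⁻,N⁺). -/

import Mathlib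

/-!
For `b < 0` the map `N ↦ I(N)` is positive, continuous and nondecreasing (its integrand
decreases in `bN`), so `G N := 1 / I(N)` is continuous and nonincreasing and `G ∘ G` is
nondecreasing. The even and odd subsequences are orbits of `G ∘ G`, hence monotone; they lie
in `[0, G 0]`, so they converge, and by continuity of `G` their limits form a 2-cycle of `G`.
A 2-cycle `x < y` of a nonincreasing map strictly brackets each of its fixed points, and a
degenerate 2-cycle is a fixed point, i.e. `N*`.
-/

open MeasureTheory Real Filter

/-- The function `I(N)` from the NNLIF model. -/
noncomputable def Ifun (b V_R V_F N : ℝ) : ℝ :=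
  ∫ v in Set.Iic V_F,
    Real.exp (-(v - b * N) ^ 2 / 2) * ∫ w in (max v V_R)..V_F, Real.exp ((w - b * N) ^ 2 / 2)

open Set Topology

section AntitoneDynamics

variable {α : Type*}

theorem Monotone.monotone_or_antitone_of_succ_eq [LinearOrder α] {F : α → α} (hF : Monotone F)
    {v : ℕ → α} (hv : ∀ k, v (k + 1) = F (v k)) : Monotone v ∨ Antitone v := by
  rcases le_total (v 0) (v 1) with h | h
  · refine .inl (monotone_nat_of_le_succ fun k => ?_)
    induction k with
    | zero => exact h
    | succ k ih => rw [hv k, hv (k + 1)]; exact hF ih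
  · refine .inr (antitone_nat_of_succ_le fun k => ?_)
    induction k with
    | zero => exact h
    | succ k ih => rw [hv k, hv (k + 1)]; exact hF ih

theorem Antitone.monotone_or_antitone_two_mul_add_of_succ_eq [LinearOrder α] {G : α → α}
    (hG : Antitone G) {u : ℕ → α} (hu : ∀ k, u (k + 1) = G (u k)) (j : ℕ) :
    Monotone (fun k => u (2 * k + j)) ∨ Antitone (fun k => u (2 * k + j)) :=
  (hG.comp hG).monotone_or_antitone_of_succ_eq fun k => by
    rw [show 2 * (k + 1) + j = 2 * k + j + 1 + 1 by ring, hu, hu, Function.comp_apply]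

theorem Antitone.lt_and_lt_of_two_cycle [LinearOrder α] {G : α → α} (hG : Antitone G)
    {x y s : α} (hx : G x = y) (hy : G y = x) (hs : G s = s) (hxy : x < y) : x < s ∧ s < y := by
  constructor
  · by_contra! hsx
    have hxs : G y ≤ G s := hG (hsx.trans hxy.le)
    rw [hy, hs] at hxs
    obtain rfl := le_antisymm hsx hxs
    exact hxy.ne' (hx ▸ hs)
  · by_contra! hys
    have hsy : G s ≤ G x := hG (hxy.le.trans hys)
    rw [hs, hx] at hsy
    obtain rfl := le_antisymm hsy hys
    exact hxy.ne (hy ▸ hs)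

theorem Antitone.min_lt_and_lt_max_of_two_cycle [LinearOrder α] {G : α → α} (hG : Antitone G)
    {x y s : α} (hx : G x = y) (hy : G y = x) (hs : G s = s) (hxy : x ≠ y) :
    min x y < s ∧ s < max x y := by
  rcases hxy.lt_or_gt with h | h
  · simpa [h.le] using hG.lt_and_lt_of_two_cycle hx hy hs h
  · simpa [h.le] using hG.lt_and_lt_of_two_cycle hy hx hs h

theorem two_cycle_of_tendsto [TopologicalSpace α] [T2Space α] {G : α → α} (hG : Continuous G)
    {u : ℕ → α} (hu : ∀ k, u (k + 1) = G (u k)) {p m : α}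
    (hp : Tendsto (fun k => u (2 * k)) atTop (𝓝 p))
    (hm : Tendsto (fun k => u (2 * k + 1)) atTop (𝓝 m)) : G p = m ∧ G m = p := by
  constructor
  · refine tendsto_nhds_unique ?_ hm
    simpa only [Function.comp_def, hu] using (hG.tendsto p).comp hp
  · refine tendsto_nhds_unique ?_ (hp.comp (tendsto_add_atTop_nat 1))
    simpa only [Function.comp_def, mul_add, mul_one, hu] using (hG.tendsto m).comp hm

end AntitoneDynamics

theorem exists_tendsto_of_monotone_or_antitone {v : ℕ → ℝ} (hv : Monotone v ∨ Antitone v)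
    {a c : ℝ} (h : ∀ k, v k ∈ Icc a c) : ∃ l, Tendsto v atTop (𝓝 l) := by
  rcases hv with hv | hv
  · exact ⟨_, tendsto_atTop_ciSup hv ⟨c, by rintro _ ⟨k, rfl⟩; exact (h k).2⟩⟩
  · exact ⟨_, tendsto_atTop_ciInf hv ⟨a, by rintro _ ⟨k, rfl⟩; exact (h k).1⟩⟩

section Integrand

variable {V_R V_F : ℝ}

noncomputable def ifunIntegrand (V_R V_F c v : ℝ) : ℝ :=
  exp (-(v - c) ^ 2 / 2) * ∫ w in (max v V_R)..V_F, exp ((w - c) ^ 2 / 2)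

theorem Ifun_eq_setIntegral_ifunIntegrand (b N : ℝ) :
    Ifun b V_R V_F N = ∫ v in Iic V_F, ifunIntegrand V_R V_F (b * N) v := rfl

theorem continuous_ifunIntegrand :
    Continuous fun p : ℝ × ℝ => ifunIntegrand V_R V_F p.1 p.2 := by
  refine (by fun_prop : Continuous fun p : ℝ × ℝ => exp (-(p.2 - p.1) ^ 2 / 2)).mul ?_
  simp_rw [intervalIntegral.integral_symm V_F]
  exact (intervalIntegral.continuous_parametric_intervalIntegral_of_continuous
    (f := fun (p : ℝ × ℝ) w => exp ((w - p.1) ^ 2 / 2)) (by fun_prop)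
    (continuous_snd.max continuous_const)).neg

theorem ifunIntegrand_nonneg (hV : V_R ≤ V_F) (c : ℝ) {v : ℝ} (hv : v ≤ V_F) :
    0 ≤ ifunIntegrand V_R V_F c v :=
  mul_nonneg (exp_pos _).le
    (intervalIntegral.integral_nonneg (max_le hv hV) fun _ _ => (exp_pos _).le)

theorem ifunIntegrand_pos (hV : V_R < V_F) (c : ℝ) {v : ℝ} (hv : v < V_F) :
    0 < ifunIntegrand V_R V_F c v :=
  mul_pos (exp_pos _) <| intervalIntegral.intervalIntegral_pos_of_pos_on
    ((by fun_prop : Continuous fun w => exp ((w - c) ^ 2 / 2)).intervalIntegrable _ _)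
    (fun _ _ => exp_pos _) (max_lt hv hV)

theorem exists_integrable_bound_ifunIntegrand (hV : V_R ≤ V_F) (R : ℝ) :
    ∃ g : ℝ → ℝ, Integrable g ∧
      ∀ c v, |c| ≤ R → v ≤ V_F → ‖ifunIntegrand V_R V_F c v‖ ≤ g v := by
  set M := max |V_R| |V_F| + R
  set K := exp (R ^ 2 / 2) * (exp (M ^ 2 / 2) * (V_F - V_R))
  refine ⟨fun v => K * exp (-4⁻¹ * v ^ 2),
    (integrable_exp_neg_mul_sq (by norm_num : (0 : ℝ) < 4⁻¹)).const_mul K,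
    fun c v hc hv => ?_⟩
  have hgauss : exp (-(v - c) ^ 2 / 2) ≤ exp (R ^ 2 / 2) * exp (-4⁻¹ * v ^ 2) := by
    rw [← exp_add, exp_le_exp]
    nlinarith [sq_nonneg (v - 2 * c), sq_abs c, abs_nonneg c]
  have hinner : ‖∫ w in (max v V_R)..V_F, exp ((w - c) ^ 2 / 2)‖
      ≤ exp (M ^ 2 / 2) * (V_F - V_R) := by
    refine (intervalIntegral.norm_integral_le_of_norm_le_const (C := exp (M ^ 2 / 2))
      fun w hw => ?_).trans ?_
    · rw [uIoc_of_le (max_le hv hV)] at hw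
      have hw' : |w| ≤ max |V_R| |V_F| :=
        abs_le_max_abs_abs ((le_max_right _ _).trans hw.1.le) hw.2
      have hwc : |w - c| ≤ M := (abs_sub _ _).trans (add_le_add hw' hc)
      rw [norm_of_nonneg (exp_pos _).le, exp_le_exp, ← sq_abs (w - c)]
      gcongr
    · rw [abs_of_nonneg (sub_nonneg.2 (max_le hv hV))]
      gcongr
      exact le_max_right _ _
  rw [ifunIntegrand, norm_mul, norm_of_nonneg (exp_pos _).le]
  calc exp (-(v - c) ^ 2 / 2) * ‖∫ w in (max v V_R)..V_F, exp ((w - c) ^ 2 / 2)‖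
      ≤ (exp (R ^ 2 / 2) * exp (-4⁻¹ * v ^ 2)) * (exp (M ^ 2 / 2) * (V_F - V_R)) :=
        mul_le_mul hgauss hinner (norm_nonneg _) (by positivity)
    _ = _ := by ring

theorem integrableOn_ifunIntegrand (hV : V_R ≤ V_F) (c : ℝ) :
    IntegrableOn (ifunIntegrand V_R V_F c) (Iic V_F) := by
  obtain ⟨g, hg, hbound⟩ := exists_integrable_bound_ifunIntegrand hV |c|
  refine hg.restrict.mono'
    (continuous_ifunIntegrand.comp (Continuous.prodMk_right c)).aestronglyMeasurable ?_
  exact (ae_restrict_iff' measurableSet_Iic).2 (.of_forall fun v hv => hbound c v le_rfl hv)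

theorem antitone_ifunIntegrand (hV : V_R ≤ V_F) {v : ℝ} (hv : v ≤ V_F) :
    Antitone fun c => ifunIntegrand V_R V_F c v := by
  intro c₁ c₂ hc
  simp only [ifunIntegrand, ← intervalIntegral.integral_const_mul, ← exp_add]
  refine intervalIntegral.integral_mono_on (max_le hv hV) (Continuous.intervalIntegrable
    (by fun_prop) _ _) (Continuous.intervalIntegrable (by fun_prop) _ _) fun w hw => ?_
  rw [exp_le_exp]
  -- the exponent is `(w - v) * (w + v - 2 c) / 2` with `v ≤ w`
  nlinarith [mul_le_mul_of_nonneg_left hc (sub_nonneg.2 ((le_max_left v V_R).trans hw.1))]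

end Integrand

section Ifun

variable {b V_R V_F : ℝ}

theorem Ifun_pos (hV : V_R < V_F) (N : ℝ) : 0 < Ifun b V_R V_F N := by
  rw [Ifun_eq_setIntegral_ifunIntegrand, setIntegral_pos_iff_support_of_nonneg_ae
    ((ae_restrict_iff' measurableSet_Iic).2 (.of_forall fun v hv =>
      ifunIntegrand_nonneg hV.le _ hv)) (integrableOn_ifunIntegrand hV.le _)]
  have hsub : Ioo (V_F - 1) V_F ⊆ Function.support (ifunIntegrand V_R V_F (b * N)) ∩ Iic V_F :=
    fun v hv => ⟨(ifunIntegrand_pos hV _ hv.2).ne', hv.2.le⟩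
  refine lt_of_lt_of_le ?_ (measure_mono hsub)
  simp

theorem monotone_Ifun (hV : V_R ≤ V_F) (hb : b ≤ 0) : Monotone (Ifun b V_R V_F) := by
  intro N₁ N₂ hN
  simp only [Ifun_eq_setIntegral_ifunIntegrand]
  exact setIntegral_mono_on (integrableOn_ifunIntegrand hV _) (integrableOn_ifunIntegrand hV _)
    measurableSet_Iic fun v hv =>
      antitone_ifunIntegrand hV hv (mul_le_mul_of_nonpos_left hN hb)

theorem continuous_setIntegral_ifunIntegrand (hV : V_R ≤ V_F) :
    Continuous fun c => ∫ v in Iic V_F, ifunIntegrand V_R V_F c v := by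
  refine continuous_iff_continuousAt.2 fun c₀ => ?_
  obtain ⟨g, hg, hbound⟩ := exists_integrable_bound_ifunIntegrand hV (|c₀| + 1)
  refine continuousAt_of_dominated (bound := g)
    (.of_forall fun c =>
      (continuous_ifunIntegrand.comp (Continuous.prodMk_right c)).aestronglyMeasurable)
    ?_ hg.restrict
    (.of_forall fun v => (continuous_ifunIntegrand.comp (Continuous.prodMk_left v)).continuousAt)
  filter_upwards [Metric.closedBall_mem_nhds c₀ one_pos] with c hc
  refine (ae_restrict_iff' measurableSet_Iic).2 (.of_forall fun v hv => hbound c v ?_ hv)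
  have := abs_sub_abs_le_abs_sub c c₀
  rw [Metric.mem_closedBall, Real.dist_eq] at hc
  linarith

theorem continuous_Ifun (hV : V_R ≤ V_F) : Continuous (Ifun b V_R V_F) :=
  (continuous_setIntegral_ifunIntegrand hV).comp (continuous_const_mul b)

end Ifun

theorem firingRateSeq_inhibitory_general (b V_R V_F : ℝ) (hV : V_R < V_F) (hb : b < 0)
    (Nstar : ℝ)
    (hfix : Nstar * Ifun b V_R V_F Nstar = 1)
    (huniq : ∀ N : ℝ, 0 ≤ N → N * Ifun b V_R V_F N = 1 → N = Nstar)
    (Nseq : ℕ → ℝ) (h0 : 0 ≤ Nseq 0)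
    (hrec : ∀ k : ℕ, Nseq (k + 1) = 1 / Ifun b V_R V_F (Nseq k)) :
    (Monotone (fun k => Nseq (2 * k)) ∨ Antitone (fun k => Nseq (2 * k))) ∧
    (Monotone (fun k => Nseq (2 * k + 1)) ∨ Antitone (fun k => Nseq (2 * k + 1))) ∧
    (∀ k : ℕ, 1 ≤ k → Nseq k ∈ Set.Icc 0 (1 / Ifun b V_R V_F 0)) ∧
    ∃ Nplus Nminus : ℝ,
      Tendsto (fun k => Nseq (2 * k)) atTop (nhds Nplus) ∧
      Tendsto (fun k => Nseq (2 * k + 1)) atTop (nhds Nminus) ∧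
      1 / Ifun b V_R V_F Nplus = Nminus ∧
      1 / Ifun b V_R V_F Nminus = Nplus ∧
      ((Nminus = Nstar ∧ Nplus = Nstar) ∨
        (Nminus ≠ Nplus ∧ min Nminus Nplus < Nstar ∧ Nstar < max Nminus Nplus)) := by
  set G : ℝ → ℝ := fun N => 1 / Ifun b V_R V_F N
  have hI := Ifun_pos (b := b) hV
  have hG_anti : Antitone G := fun x y h =>
    one_div_le_one_div_of_le (hI x) (monotone_Ifun hV.le hb.le h)
  have hG_cont : Continuous G := continuous_const.div (continuous_Ifun hV.le) fun N => (hI N).ne'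
  have hG_fix : ∀ N, G N = N ↔ N * Ifun b V_R V_F N = 1 := fun N => by
    rw [eq_comm]; exact eq_div_iff (hI N).ne'
  have hnn : ∀ k, 0 ≤ Nseq k := by
    rintro (_ | k)
    exacts [h0, hrec k ▸ (one_div_pos.2 (hI _)).le]
  have hmem : ∀ k, 1 ≤ k → Nseq k ∈ Icc 0 (G 0) := by
    rintro (_ | k) hk
    exacts [absurd hk (by omega), ⟨hnn _, hrec k ▸ hG_anti (hnn k)⟩]
  have hbdd : ∀ k, Nseq k ∈ Icc 0 (max (Nseq 0) (G 0)) := by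
    rintro (_ | k)
    exacts [⟨h0, le_max_left _ _⟩, ⟨hnn _, (hmem _ k.succ_pos).2.trans (le_max_right _ _)⟩]
  have heven := hG_anti.monotone_or_antitone_two_mul_add_of_succ_eq hrec 0
  have hodd := hG_anti.monotone_or_antitone_two_mul_add_of_succ_eq hrec 1
  obtain ⟨Nplus, hplus⟩ := exists_tendsto_of_monotone_or_antitone heven fun _ => hbdd _
  obtain ⟨Nminus, hminus⟩ := exists_tendsto_of_monotone_or_antitone hodd fun _ => hbdd _
  obtain ⟨hpm, hmp⟩ := two_cycle_of_tendsto hG_cont hrec hplus hminus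
  refine ⟨heven, hodd, hmem, Nplus, Nminus, hplus, hminus, hpm, hmp, ?_⟩
  rcases eq_or_ne Nminus Nplus with rfl | hne
  · have := huniq Nminus (ge_of_tendsto' hplus fun _ => hnn _) ((hG_fix _).1 hmp)
    exact .inl ⟨this, this⟩
  · exact .inr ⟨hne, hG_anti.min_lt_and_lt_max_of_two_cycle hmp hpm ((hG_fix _).2 hfix) hne⟩

/-- Step 1 of Theorem 2.5 (inhibitory case `b < 0`): the even- and odd-indexed subsequences
of any firing rate sequence are monotone, contained in `[0, 1/I(0)]` from index `1` on,
hence convergent; their limits `N⁺`, `N⁻` satisfy `1/I(N⁺) = N⁻` and `1/I(N⁻) = N⁺`, and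
either both equal the unique equilibrium `N*`, or they form a genuine 2-cycle
surrounding `N*`. -/
theorem firingRateSeq_inhibitory (b V_R V_F : ℝ) (hV : V_R < V_F) (hb : b < 0)
    (Nstar : ℝ) (hNstar : 0 < Nstar)
    (hfix : Nstar * Ifun b V_R V_F Nstar = 1)
    (huniq : ∀ N : ℝ, 0 ≤ N → N * Ifun b V_R V_F N = 1 → N = Nstar)
    (Nseq : ℕ → ℝ) (h0 : 0 ≤ Nseq 0)
    (hrec : ∀ k : ℕ, Nseq (k + 1) = 1 / Ifun b V_R V_F (Nseq k)) :
    (Monotone (fun k => Nseq (2 * k)) ∨ Antitone (fun k => Nseq (2 * k))) ∧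
    (Monotone (fun k => Nseq (2 * k + 1)) ∨ Antitone (fun k => Nseq (2 * k + 1))) ∧
    (∀ k : ℕ, 1 ≤ k → Nseq k ∈ Set.Icc 0 (1 / Ifun b V_R V_F 0)) ∧
    ∃ Nplus Nminus : ℝ,
      Tendsto (fun k => Nseq (2 * k)) atTop (nhds Nplus) ∧
      Tendsto (fun k => Nseq (2 * k + 1)) atTop (nhds Nminus) ∧
      1 / Ifun b V_R V_F Nplus = Nminus ∧
      1 / Ifun b V_R V_F Nminus = Nplus ∧
      ((Nminus = Nstar ∧ Nplus = Nstar) ∨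
        (Nminus ≠ Nplus ∧ min Nminus Nplus < Nstar ∧ Nstar < max Nminus Nplus)) :=
  firingRateSeq_inhibitory_general b V_R V_F hV hb Nstar hfix huniq Nseq h0 hrec
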